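/- arXiv:2001.01860 — 3 statements merged into one kernel-verified Lean document; each statement's English description precedes it below -/
import Mathlib

section
/- Let F: ℝ → (0,∞) be log-concave on [-1,0] with F' nondecreasing on [-1,0], and let ρ ≥ 1. Then for all x ∈ (0,1): -ρF'(-x)F(x-1) - ρF'(-x)F(-x) - ρF(-x)F'(x-1) + ρF(-x)F'(-x) + 2F(x-1)F(-x) - 2F(-x)² ≤ 0. -/
/-- Key inequality in the proof of Proposition 4: if F > 0 is log-concave on [-1,0]
with nonnegative nondecreasing derivative there, and ρ ≥ 1, then the source term
expression is nonpositive on (0,1). -/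
theorem stmt2 (F F' : ℝ → ℝ) (ρ : ℝ) (hρ : 1 ≤ ρ)
    (hFpos : ∀ x, 0 < F x)
    (hderiv : ∀ x ∈ Set.Icc (-1:ℝ) 0, HasDerivAt F (F' x) x)
    (hF'nonneg : ∀ x ∈ Set.Icc (-1:ℝ) 0, 0 ≤ F' x)
    (hlogconc : ConcaveOn ℝ (Set.Icc (-1:ℝ) 0) (fun x => Real.log (F x)))
    (hF'mono : MonotoneOn F' (Set.Icc (-1:ℝ) 0)) :
    ∀ x ∈ Set.Ioo (0:ℝ) 1,
      -ρ * F' (-x) * F (x-1) - ρ * F' (-x) * F (-x) - ρ * F (-x) * F' (x-1)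
        + ρ * F (-x) * F' (-x) + 2 * F (x-1) * F (-x) - 2 * (F (-x))^2 ≤ 0 := by
  intro x hx
  obtain ⟨hx0, hx1⟩ := hx
  set u : ℝ := -x with hu
  set v : ℝ := x - 1 with hv
  have huI : u ∈ Set.Icc (-1:ℝ) 0 := ⟨by linarith, by linarith⟩
  have hvI : v ∈ Set.Icc (-1:ℝ) 0 := ⟨by linarith, by linarith⟩
  have hFu := hFpos u
  have hFv := hFpos v
  have hF'u := hF'nonneg u huI
  have hF'v := hF'nonneg v hvI
  -- key reduction: suffices 2 * F u * (F v - F u) ≤ F v * F' u + F u * F' v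
  have key : 2 * F u * (F v - F u) ≤ F v * F' u + F u * F' v := by
    rcases le_or_gt (F v) (F u) with hle | hlt
    · nlinarith
    · -- F v > F u implies u < v since F is monotone on Icc
      have hmono : MonotoneOn F (Set.Icc (-1:ℝ) 0) := by
        apply monotoneOn_of_deriv_nonneg (convex_Icc _ _)
        · exact fun y hy => (hderiv y hy).continuousAt.continuousWithinAt
        · intro y hy
          rw [interior_Icc] at hy
          exact (hderiv y (Set.Ioo_subset_Icc_self hy)).differentiableAt.differentiableWithinAt
        · intro y hy
          rw [interior_Icc] at hy
          rw [(hderiv y (Set.Ioo_subset_Icc_self hy)).deriv]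
          exact hF'nonneg y (Set.Ioo_subset_Icc_self hy)
      have huv : u < v := by
        by_contra h
        exact absurd (hmono hvI huI (not_lt.mp h)) (not_le.mpr hlt)
      -- MVT: F v - F u = F' ξ * (v - u) ≤ F' v * (v - u) ≤ F' v
      have hcont : ContinuousOn F (Set.Icc u v) := fun y hy =>
        (hderiv y (Set.Icc_subset_Icc huI.1 hvI.2 hy)).continuousAt.continuousWithinAt
      obtain ⟨ξ, hξ, hξeq⟩ := exists_hasDerivAt_eq_slope F F' huv hcont
        (fun y hy => hderiv y (Set.Icc_subset_Icc huI.1 hvI.2 (Set.Ioo_subset_Icc_self hy)))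
      have hξI : ξ ∈ Set.Icc (-1:ℝ) 0 :=
        Set.Icc_subset_Icc huI.1 hvI.2 (Set.Ioo_subset_Icc_self hξ)
      have hξv : F' ξ ≤ F' v := hF'mono hξI hvI hξ.2.le
      have hvu1 : v - u ≤ 1 := by rw [hu, hv]; linarith
      have hFvFu : F v - F u ≤ F' v := by
        have h1 : F v - F u = F' ξ * (v - u) := by
          rw [hξeq, div_mul_cancel₀ _ (sub_ne_zero.mpr huv.ne')]
        have : F' ξ * (v - u) ≤ F' v * 1 := by
          apply mul_le_mul hξv hvu1 (by linarith) hF'v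
        linarith
      -- log-concavity: F' u / F u ≥ F' v / F v
      have hlogu : HasDerivAt (fun y => Real.log (F y)) (F' u / F u) u :=
        (hderiv u huI).log (ne_of_gt hFu)
      have hlogv : HasDerivAt (fun y => Real.log (F y)) (F' v / F v) v :=
        (hderiv v hvI).log (ne_of_gt hFv)
      have h1 := hlogconc.slope_le_of_hasDerivAt huI hvI huv hlogu
      have h2 := hlogconc.le_slope_of_hasDerivAt huI hvI huv hlogv
      have hratio : F' v / F v ≤ F' u / F u := le_trans h2 h1
      have hcross : F u * F' v ≤ F v * F' u := by
        rw [div_le_div_iff₀ hFv hFu] at hratio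
        linarith
      nlinarith
  nlinarith [mul_nonneg (sub_nonneg.mpr hρ) (mul_nonneg hF'u hFv.le),
    mul_nonneg (sub_nonneg.mpr hρ) (mul_nonneg hF'v hFu.le)]
end

section
/- Let μ: [0,1] → ℝ be continuous with μ(x) = c(2x-1) for some constant c > 0 (so μ' = 2c > 0), and let h: [0,1] → ℝ be continuous with h(x) < 0 for all x ∈ (0,1). Suppose g ∈ C²([0,1]) satisfies (1/2)g'' - μg' - μ'g = h on (0,1), g(0) = g(1), and ∫₀¹ g(x)dx = 0. Then g(1) < 0. -/
/-!
The flux `F = (1/2) g' - μ g` satisfies `F' = h < 0`, so it is strictly decreasing. With the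
integrating factor `φ = exp (-2M)`, `M' = μ`, one has `(g φ)' = 2 F φ`, so `g φ` increases while
`F > 0` and then decreases: it lies strictly above the smaller of its boundary values inside
`(0, 1)`. If `g 1 = g 0 ≥ 0` this makes `g > 0` on `(0, 1)`, contradicting `∫₀¹ g = 0`.
-/

open Set Real

theorem hasDerivAt_flux {g g' μ : ℝ → ℝ} {x g'' μ' : ℝ} (hg : HasDerivAt g (g' x) x)
    (hg' : HasDerivAt g' g'' x) (hμ : HasDerivAt μ μ' x) :
    HasDerivAt (fun y => (1/2) * g' y - μ y * g y) ((1/2) * g'' - μ x * g' x - μ' * g x) x :=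
  ((hg'.const_mul (1/2)).fun_sub (hμ.fun_mul hg)).congr_deriv (by ring)

theorem hasDerivAt_mul_exp_neg_two_mul {g g' μ M : ℝ → ℝ} {x : ℝ} (hg : HasDerivAt g (g' x) x)
    (hM : HasDerivAt M (μ x) x) :
    HasDerivAt (fun y => g y * exp (-2 * M y))
      (((1/2) * g' x - μ x * g x) * (2 * exp (-2 * M x))) x :=
  (hg.fun_mul (hM.const_mul (-2)).exp).congr_deriv (by ring)

theorem min_lt_of_hasDerivAt_mul_pos_of_strictAntiOn {G F w : ℝ → ℝ} {a b x : ℝ}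
    (hG : ContinuousOn G (Icc a b)) (hGd : ∀ y ∈ Ioo a b, HasDerivAt G (F y * w y) y)
    (hw : ∀ y ∈ Ioo a b, 0 < w y) (hF : StrictAntiOn F (Ioo a b)) (hx : x ∈ Ioo a b) :
    min (G a) (G b) < G x := by
  obtain ⟨hax, hxb⟩ := hx
  rcases le_or_gt 0 (F x) with hFx | hFx
  · have hmono : StrictMonoOn G (Icc a x) := by
      refine strictMonoOn_of_hasDerivWithinAt_pos (f' := fun y => F y * w y) (convex_Icc a x)
        (hG.mono (Icc_subset_Icc_right hxb.le)) (fun y hy => ?_) (fun y hy => ?_)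
      all_goals rw [interior_Icc] at hy
      · exact (hGd y ⟨hy.1, hy.2.trans hxb⟩).hasDerivWithinAt
      · have hFy : 0 < F y :=
          hFx.trans_lt (hF ⟨hy.1, hy.2.trans hxb⟩ ⟨hax, hxb⟩ hy.2)
        exact mul_pos hFy (hw y ⟨hy.1, hy.2.trans hxb⟩)
    exact (min_le_left _ _).trans_lt
      (hmono (left_mem_Icc.2 hax.le) (right_mem_Icc.2 hax.le) hax)
  · have hanti : StrictAntiOn G (Icc x b) := by
      refine strictAntiOn_of_hasDerivWithinAt_neg (f' := fun y => F y * w y) (convex_Icc x b)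
        (hG.mono (Icc_subset_Icc_left hax.le)) (fun y hy => ?_) (fun y hy => ?_)
      all_goals rw [interior_Icc] at hy
      · exact (hGd y ⟨hax.trans hy.1, hy.2⟩).hasDerivWithinAt
      · have hFy : F y < 0 :=
          (hF ⟨hax, hxb⟩ ⟨hax.trans hy.1, hy.2⟩ hy.1).trans hFx
        exact mul_neg_of_neg_of_pos hFy (hw y ⟨hax.trans hy.1, hy.2⟩)
    exact (min_le_right _ _).trans_lt
      (hanti (left_mem_Icc.2 hxb.le) (right_mem_Icc.2 hxb.le) hxb)

theorem pos_of_strictAntiOn_flux {g g' μ M : ℝ → ℝ} {a b x : ℝ}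
    (hg : ContinuousOn g (Icc a b)) (hgd : ∀ y ∈ Ioo a b, HasDerivAt g (g' y) y)
    (hM : ∀ y, HasDerivAt M (μ y) y)
    (hflux : StrictAntiOn (fun y => (1/2) * g' y - μ y * g y) (Ioo a b))
    (ha : 0 ≤ g a) (hb : 0 ≤ g b) (hx : x ∈ Ioo a b) : 0 < g x := by
  have hφc : Continuous fun y => exp (-2 * M y) :=
    continuous_exp.comp (continuous_const.mul (continuous_iff_continuousAt.2
      fun y => (hM y).continuousAt))
  have hmin := min_lt_of_hasDerivAt_mul_pos_of_strictAntiOn (hg.mul hφc.continuousOn)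
    (fun y hy => hasDerivAt_mul_exp_neg_two_mul (hgd y hy) (hM y))
    (fun y _ => by positivity) hflux hx
  have hGx : 0 < g x * exp (-2 * M x) :=
    (le_min (mul_nonneg ha (exp_pos _).le) (mul_nonneg hb (exp_pos _).le)).trans_lt hmin
  exact pos_of_mul_pos_left hGx (exp_pos _).le

theorem stmt4_general (c : ℝ) (μ h g g' g'' : ℝ → ℝ)
    (hμ : ∀ x, μ x = c * (2*x - 1))
    (hhneg : ∀ x ∈ Set.Ioo (0:ℝ) 1, h x < 0)
    (hg : ContinuousOn g (Set.Icc 0 1))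
    (hd1 : ∀ x ∈ Set.Ioo (0:ℝ) 1, HasDerivAt g (g' x) x)
    (hd2 : ∀ x ∈ Set.Ioo (0:ℝ) 1, HasDerivAt g' (g'' x) x)
    (hode : ∀ x ∈ Set.Ioo (0:ℝ) 1, (1/2) * g'' x - μ x * g' x - (2*c) * g x = h x)
    (hbc : g 0 = g 1)
    (hint : (∫ x in (0:ℝ)..1, g x) = 0) :
    g 1 < 0 := by
  by_contra! hg1
  have hμd (x : ℝ) : HasDerivAt μ (2*c) x := by
    rw [show μ = fun y => c * (2*y - 1) from funext hμ]
    exact (((hasDerivAt_id x).const_mul 2 |>.sub_const 1).const_mul c).congr_deriv (by ring)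
  have hM (x : ℝ) : HasDerivAt (fun y => c * (y^2 - y)) (μ x) x := by
    rw [hμ]
    exact (((hasDerivAt_pow 2 x).fun_sub (hasDerivAt_id x)).const_mul c).congr_deriv (by ring)
  have hFd (x) (hx : x ∈ Ioo (0:ℝ) 1) :
      HasDerivAt (fun y => (1/2) * g' y - μ y * g y) (h x) x :=
    hode x hx ▸ hasDerivAt_flux (hd1 x hx) (hd2 x hx) (hμd x)
  have hflux : StrictAntiOn (fun y => (1/2) * g' y - μ y * g y) (Ioo 0 1) := by
    refine strictAntiOn_of_hasDerivWithinAt_neg (f' := h) (convex_Ioo 0 1)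
      (fun x hx => (hFd x hx).continuousAt.continuousWithinAt) ?_ ?_ <;> rw [interior_Ioo]
    · exact fun x hx => (hFd x hx).hasDerivWithinAt
    · exact hhneg
  have hgpos (x) (hx : x ∈ Ioo (0:ℝ) 1) : 0 < g x :=
    pos_of_strictAntiOn_flux hg hd1 hM hflux (hbc ▸ hg1) hg1 hx
  have hgi : IntervalIntegrable g MeasureTheory.volume 0 1 :=
    hg.intervalIntegrable_of_Icc zero_le_one
  exact (intervalIntegral.intervalIntegral_pos_of_pos_on hgi hgpos one_pos).ne' hint

/-- Maximum-principle argument of Proposition 4: with μ(x) = c(2x-1), c > 0,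
h < 0 on (0,1), any C² solution g of (1/2)g'' - μ g' - μ' g = h with
g(0) = g(1) and ∫₀¹ g = 0 satisfies g(1) < 0. -/
theorem stmt4 (c : ℝ) (hc : 0 < c) (μ h g g' g'' : ℝ → ℝ)
    (hμ : ∀ x, μ x = c * (2*x - 1))
    (hh : ContinuousOn h (Set.Icc 0 1)) (hhneg : ∀ x ∈ Set.Ioo (0:ℝ) 1, h x < 0)
    (hg : ContinuousOn g (Set.Icc 0 1)) (hg'c : ContinuousOn g' (Set.Icc 0 1))
    (hg''c : ContinuousOn g'' (Set.Icc 0 1))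
    (hd1 : ∀ x ∈ Set.Ioo (0:ℝ) 1, HasDerivAt g (g' x) x)
    (hd2 : ∀ x ∈ Set.Ioo (0:ℝ) 1, HasDerivAt g' (g'' x) x)
    (hode : ∀ x ∈ Set.Ioo (0:ℝ) 1, (1/2) * g'' x - μ x * g' x - (2*c) * g x = h x)
    (hbc : g 0 = g 1)
    (hint : (∫ x in (0:ℝ)..1, g x) = 0) :
    g 1 < 0 :=
  stmt4_general c μ h g g' g'' hμ hhneg hg hd1 hd2 hode hbc hint
end

section
/- Let Φ denote the standard normal c.d.f., σ > 0, μ₊, μ₋ ∈ ℝ, and ψ: [0,1] → ℝ continuous with ψ(0) = ψ(1). Then as Q → 0⁺, ∫₀¹ [Φ((x - 1 + μ₊Q)/(σ√Q)) - Φ((x - 1 - μ₋Q)/(σ√Q))]ψ(x)dx = Q ψ(1)(μ₊+μ₋)/2 + o(Q). -/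
open Filter Asymptotics MeasureTheory intervalIntegral Set

/-- Standard normal c.d.f. -/
noncomputable def stdNormalCDF (y : ℝ) : ℝ :=
  ∫ z in Set.Iic y, Real.exp (-z^2/2) / Real.sqrt (2*Real.pi)

noncomputable def gaussD (z : ℝ) : ℝ := Real.exp (-z^2/2) / Real.sqrt (2*Real.pi)

lemma gaussD_eq : gaussD = fun z => Real.exp (-(1/2) * z^2) * (Real.sqrt (2*Real.pi))⁻¹ := by
  funext z; simp only [gaussD, div_eq_mul_inv]; ring_nf

lemma gaussD_integrable : Integrable gaussD := by
  rw [gaussD_eq]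
  exact (integrable_exp_neg_mul_sq (by norm_num)).mul_const _

lemma gaussD_nonneg (z : ℝ) : 0 ≤ gaussD z :=
  div_nonneg (Real.exp_nonneg _) (Real.sqrt_nonneg _)

lemma sqrt_two_pi_ge_one : (1:ℝ) ≤ Real.sqrt (2*Real.pi) := by
  rw [show (1:ℝ) = Real.sqrt 1 by simp]
  exact Real.sqrt_le_sqrt (by nlinarith [Real.pi_gt_three])

lemma gaussD_le_one (z : ℝ) : gaussD z ≤ 1 := by
  have h1 : Real.exp (-z^2/2) ≤ 1 := Real.exp_le_one_iff.mpr (by nlinarith [sq_nonneg z])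
  have := sqrt_two_pi_ge_one
  calc gaussD z ≤ 1 / Real.sqrt (2*Real.pi) := by
        apply div_le_div_of_nonneg_right h1 (by linarith) |>.trans_eq rfl
    _ ≤ 1 := by rw [div_le_one (by linarith)]; exact this

lemma cdf_sub (a b : ℝ) : stdNormalCDF a - stdNormalCDF b = ∫ z in b..a, gaussD z := by
  unfold stdNormalCDF
  exact integral_Iic_sub_Iic gaussD_integrable.integrableOn gaussD_integrable.integrableOn

lemma cdf_lipschitz (a b : ℝ) : |stdNormalCDF a - stdNormalCDF b| ≤ |a - b| := by
  rw [cdf_sub]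
  have := intervalIntegral.norm_integral_le_of_norm_le_const
    (f := gaussD) (a := b) (b := a) (C := 1)
    (fun x _ => by rw [Real.norm_eq_abs, abs_of_nonneg (gaussD_nonneg x)]; exact gaussD_le_one x)
  rw [Real.norm_eq_abs] at this
  calc |∫ z in b..a, gaussD z| ≤ 1 * |a - b| := this
    _ = |a - b| := one_mul _

lemma cdf_continuous : Continuous stdNormalCDF := by
  have : LipschitzWith 1 stdNormalCDF := by
    apply LipschitzWith.of_dist_le_mul
    intro a b
    rw [Real.dist_eq, Real.dist_eq, NNReal.coe_one, one_mul]
    exact cdf_lipschitz a b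
  exact this.continuous

lemma gaussD_shift_bound {t h : ℝ} (ht : t ≤ 0) (hh : |h| ≤ 1) :
    gaussD (t + h) ≤ Real.exp (1/2) * gaussD (t + 1) := by
  unfold gaussD
  rw [mul_div_assoc', ← Real.exp_add]
  apply div_le_div_of_nonneg_right _ (by linarith [sqrt_two_pi_ge_one]) |>.trans_eq rfl
  apply Real.exp_le_exp.mpr
  have h1 : h ≤ 1 := (abs_le.mp hh).2
  nlinarith [sq_nonneg h]

lemma gaussD_hasDeriv (x : ℝ) :
    HasDerivAt gaussD ((-x * Real.exp (-(1/2)*x^2)) * (Real.sqrt (2*Real.pi))⁻¹) x := by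
  rw [gaussD_eq]
  have h1 : HasDerivAt (fun z : ℝ => -(1/2) * z^2) (-x) x := by
    simpa using ((hasDerivAt_pow 2 x).const_mul (-(1/2):ℝ))
  have := (h1.exp).mul_const (Real.sqrt (2*Real.pi))⁻¹
  refine this.congr_deriv ?_
  ring

lemma gaussD_lipschitz : ∀ (a b : ℝ), |gaussD a - gaussD b| ≤ |a - b| := by
  have hdiff : Differentiable ℝ gaussD := fun x => (gaussD_hasDeriv x).differentiableAt
  have hlip : LipschitzWith 1 gaussD := by
    apply lipschitzWith_of_nnnorm_deriv_le hdiff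
    intro x
    rw [(gaussD_hasDeriv x).deriv]
    rw [← NNReal.coe_le_coe, coe_nnnorm, NNReal.coe_one, Real.norm_eq_abs]
    have h2 : |(-x * Real.exp (-(1/2)*x^2)) * (Real.sqrt (2*Real.pi))⁻¹|
        = (|x| * Real.exp (-(1/2)*x^2)) * |(Real.sqrt (2*Real.pi))⁻¹| := by
      rw [abs_mul, abs_mul, abs_neg, abs_of_nonneg (Real.exp_nonneg _)]
    rw [h2]
    have h3 : |x| * Real.exp (-(1/2)*x^2) ≤ 1 := by
      have key : |x| ≤ Real.exp ((1/2)*x^2) := by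
        calc |x| ≤ 1 + (1/2)*x^2 := by nlinarith [sq_abs x, sq_nonneg (|x| - 1)]
          _ ≤ Real.exp ((1/2)*x^2) := by
              have := Real.add_one_le_exp ((1/2)*x^2); linarith
      rw [show (-(1/2)*x^2 : ℝ) = -((1/2)*x^2) by ring, Real.exp_neg, ← div_eq_mul_inv,
        div_le_one (Real.exp_pos _)]
      exact key
    have h4 : |(Real.sqrt (2*Real.pi))⁻¹| ≤ 1 := by
      rw [abs_of_nonneg (by positivity)]
      exact inv_le_one_of_one_le₀ sqrt_two_pi_ge_one
    calc (|x| * Real.exp (-(1/2)*x^2)) * |(Real.sqrt (2*Real.pi))⁻¹| ≤ 1 * 1 := by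
          apply mul_le_mul h3 h4 (abs_nonneg _) (by norm_num)
      _ = 1 := by norm_num
  intro a b
  have hd := hlip.dist_le_mul a b
  rwa [Real.dist_eq, Real.dist_eq, NNReal.coe_one, one_mul] at hd

lemma gaussD_half : ∫ t in Set.Iio (0:ℝ), gaussD t = 1/2 := by
  have h1 : ∫ t in Set.Iio (0:ℝ), gaussD t = ∫ t in Set.Iic (0:ℝ), gaussD t := by
    rw [← integral_Iic_eq_integral_Iio]
  have h2 : ∫ t in Set.Iic (0:ℝ), gaussD t = ∫ t in Set.Ioi (0:ℝ), gaussD (-t) := by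
    simpa using (integral_comp_neg_Ioi (c := (0:ℝ)) (f := gaussD)).symm
  have h3 : ∀ t : ℝ, gaussD (-t) = gaussD t := fun t => by simp [gaussD, neg_sq]
  rw [h1, h2]
  simp_rw [h3, gaussD_eq]
  rw [MeasureTheory.integral_mul_const, integral_gaussian_Ioi]
  rw [show Real.pi / (1/2) = 2 * Real.pi by ring]
  have h : Real.sqrt (2*Real.pi) ≠ 0 := by positivity
  field_simp

noncomputable def Fq (σ μp μm : ℝ) (ψ : ℝ → ℝ) (Q : ℝ) : ℝ → ℝ :=
  Set.indicator (Set.Ioc (-(σ*Real.sqrt Q)⁻¹) 0)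
    (fun t => (σ/Real.sqrt Q) * ((stdNormalCDF (t + μp*Real.sqrt Q/σ)
      - stdNormalCDF (t - μm*Real.sqrt Q/σ)) * ψ (1 + σ*Real.sqrt Q*t)))

lemma key_eq (σ μp μm : ℝ) (hσ : 0 < σ) (ψ : ℝ → ℝ) {Q : ℝ} (hQ : 0 < Q) :
    (∫ x in (0:ℝ)..1, (stdNormalCDF ((x - 1 + μp*Q)/(σ*Real.sqrt Q))
        - stdNormalCDF ((x - 1 - μm*Q)/(σ*Real.sqrt Q))) * ψ x)
    = Q * ∫ t, Fq σ μp μm ψ Q t := by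
  have hs : 0 < Real.sqrt Q := Real.sqrt_pos.mpr hQ
  have hQs : Real.sqrt Q * Real.sqrt Q = Q := Real.mul_self_sqrt hQ.le
  set r := σ * Real.sqrt Q with hrdef
  have hr : 0 < r := mul_pos hσ hs
  set f : ℝ → ℝ := fun x => (stdNormalCDF ((x - 1 + μp*Q)/r)
      - stdNormalCDF ((x - 1 - μm*Q)/r)) * ψ x with hfdef
  have step1 : (∫ t in (-r⁻¹)..0, f (r*t+1)) = r⁻¹ • ∫ x in (0:ℝ)..1, f x := by
    have := intervalIntegral.integral_comp_mul_add (a := -r⁻¹) (b := 0) f (ne_of_gt hr) 1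
    rwa [show r * -r⁻¹ + 1 = 0 by field_simp; ring, show r * 0 + 1 = 1 by ring] at this
  have step1' : (∫ x in (0:ℝ)..1, f x) = r * ∫ t in (-r⁻¹)..0, f (r*t+1) := by
    rw [step1, smul_eq_mul, ← mul_assoc, mul_inv_cancel₀ (ne_of_gt hr), one_mul]
  have harg : ∀ (t μ : ℝ), (r*t + 1 - 1 + μ*Q)/r = t + μ*Real.sqrt Q/σ := by
    intro t μ
    have e1 : r*t + 1 - 1 + μ*Q = r*t + μ*Q := by ring
    rw [e1, add_div, mul_div_cancel_left₀ _ (ne_of_gt hr)]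
    congr 1
    rw [hrdef, div_eq_div_iff (by positivity) (ne_of_gt hσ)]
    linear_combination (-(μ*σ)) * hQs
  have hintegrand : ∀ t : ℝ, f (r*t+1) = (stdNormalCDF (t + μp*Real.sqrt Q/σ)
      - stdNormalCDF (t - μm*Real.sqrt Q/σ)) * ψ (1 + r*t) := by
    intro t
    have h1 := harg t μp
    have h2 : (r*t + 1 - 1 - μm*Q)/r = t - μm*Real.sqrt Q/σ := by
      have := harg t (-μm); rw [show r*t + 1 - 1 + -μm*Q = r*t + 1 - 1 - μm*Q by ring] at this
      rw [this]; ring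
    rw [hfdef]
    simp only []
    rw [h1, h2, show r*t + 1 = 1 + r*t by ring]
  have step2 : (∫ t in (-r⁻¹)..0, f (r*t+1))
      = ∫ t, Set.indicator (Set.Ioc (-r⁻¹) 0)
          (fun t => (stdNormalCDF (t + μp*Real.sqrt Q/σ)
            - stdNormalCDF (t - μm*Real.sqrt Q/σ)) * ψ (1 + r*t)) t := by
    rw [MeasureTheory.integral_indicator measurableSet_Ioc]
    rw [← intervalIntegral.integral_of_le (neg_nonpos.mpr (inv_nonneg.mpr hr.le))]
    exact intervalIntegral.integral_congr (fun t _ => hintegrand t)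
  have step3 : (∫ t, Fq σ μp μm ψ Q t)
      = (σ/Real.sqrt Q) * ∫ t, Set.indicator (Set.Ioc (-r⁻¹) 0)
          (fun t => (stdNormalCDF (t + μp*Real.sqrt Q/σ)
            - stdNormalCDF (t - μm*Real.sqrt Q/σ)) * ψ (1 + r*t)) t := by
    rw [← MeasureTheory.integral_const_mul]
    congr 1
    funext t
    rw [Fq, ← hrdef]
    exact Set.indicator_const_mul _ _ _ _
  have hfac : Q * (σ/Real.sqrt Q) = σ * Real.sqrt Q := by
    rw [mul_div_assoc', div_eq_iff (ne_of_gt hs)]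
    linear_combination (-σ) * hQs
  rw [step1', step2, step3, ← mul_assoc, hfac, hrdef]

lemma gaussD_continuous : Continuous gaussD := by
  rw [gaussD_eq]; fun_prop

lemma abs_sub_le_of_uIoc {t em ep δ z : ℝ} (hem : |em| ≤ δ) (hep : |ep| ≤ δ)
    (hz : z ∈ Set.uIoc (t - em) (t + ep)) : |z - t| ≤ δ := by
  obtain ⟨h1, h2⟩ := abs_le.mp hem
  obtain ⟨h3, h4⟩ := abs_le.mp hep
  rcases Set.mem_uIoc.mp hz with h | h <;>
    · obtain ⟨ha, hb⟩ := h
      exact abs_le.mpr ⟨by linarith, by linarith⟩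

lemma cdf_diff_bound {t em ep δ : ℝ} (ht : t ≤ 0) (hem : |em| ≤ δ) (hep : |ep| ≤ δ)
    (hδ : δ ≤ 1) :
    |stdNormalCDF (t + ep) - stdNormalCDF (t - em)|
      ≤ (Real.exp (1/2) * gaussD (t+1)) * |ep + em| := by
  rw [cdf_sub]
  have key := intervalIntegral.norm_integral_le_of_norm_le_const
    (C := Real.exp (1/2) * gaussD (t+1)) (f := gaussD) (a := t - em) (b := t + ep)
    (fun z hz => by
      rw [Real.norm_eq_abs, abs_of_nonneg (gaussD_nonneg z)]
      have hzt : |z - t| ≤ 1 := (abs_sub_le_of_uIoc hem hep hz).trans hδ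
      have := gaussD_shift_bound ht hzt
      rwa [show t + (z - t) = z by ring] at this)
  rw [Real.norm_eq_abs, show t + ep - (t - em) = ep + em by ring] at key
  exact key

lemma cdf_diff_approx {t em ep δ : ℝ} (hem : |em| ≤ δ) (hep : |ep| ≤ δ) :
    |stdNormalCDF (t + ep) - stdNormalCDF (t - em) - (ep + em) * gaussD t|
      ≤ δ * |ep + em| := by
  rw [cdf_sub]
  have hint : (ep + em) * gaussD t = ∫ _ in (t-em)..(t+ep), gaussD t := by
    rw [intervalIntegral.integral_const, smul_eq_mul]; ring_nf
  rw [hint, ← intervalIntegral.integral_sub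
    (gaussD_continuous.intervalIntegrable _ _) (intervalIntegrable_const)]
  have key := intervalIntegral.norm_integral_le_of_norm_le_const
    (C := δ) (f := fun z => gaussD z - gaussD t) (a := t - em) (b := t + ep)
    (fun z hz => by
      rw [Real.norm_eq_abs]
      exact (gaussD_lipschitz z t).trans (abs_sub_le_of_uIoc hem hep hz))
  rw [Real.norm_eq_abs, show t + ep - (t - em) = ep + em by ring] at key
  exact key
lemma tendsto_Fq (σ μp μm : ℝ) (hσ : 0 < σ) (ψ : ℝ → ℝ)
    (hψ : ContinuousOn ψ (Set.Icc 0 1)) :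
    Tendsto (fun Q => ∫ t, Fq σ μp μm ψ Q t) (nhdsWithin 0 (Set.Ioi 0))
      (nhds ((μp + μm) * ψ 1 / 2)) := by
  obtain ⟨M0, hM0⟩ := (isCompact_Icc : IsCompact (Set.Icc (0:ℝ) 1)).exists_bound_of_continuousOn hψ
  set M := max M0 0 with hMdef
  have hM : ∀ x ∈ Set.Icc (0:ℝ) 1, |ψ x| ≤ M :=
    fun x hx => le_trans (Real.norm_eq_abs (ψ x) ▸ hM0 x hx) (le_max_left _ _)
  have hM0' : 0 ≤ M := le_max_right _ _
  -- the dominating function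
  set bound : ℝ → ℝ := fun t => ((|μp| + |μm|) * Real.exp (1/2) * M) * gaussD (t+1)
    with hbdef
  have hbound_int : Integrable bound := by
    apply Integrable.const_mul
    have : Integrable (fun t : ℝ => gaussD (t + 1)) := gaussD_integrable.comp_add_right 1
    exact this
  -- basic positivity facts
  have hsqrt_tendsto : Tendsto Real.sqrt (nhdsWithin 0 (Set.Ioi 0)) (nhds 0) := by
    have := (Real.continuous_sqrt.tendsto 0).mono_left
      (nhdsWithin_le_nhds (s := Set.Ioi (0:ℝ)))
    simpa using this
  have hδ_tendsto : Tendsto (fun Q => (|μp| + |μm|) * Real.sqrt Q / σ)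
      (nhdsWithin 0 (Set.Ioi 0)) (nhds 0) := by
    have := (hsqrt_tendsto.const_mul (|μp| + |μm|)).div_const σ
    simpa using this
  have hδ_small : ∀ᶠ Q in nhdsWithin 0 (Set.Ioi 0),
      (|μp| + |μm|) * Real.sqrt Q / σ < 1 :=
    hδ_tendsto.eventually_lt_const zero_lt_one
  -- limit function
  set flim : ℝ → ℝ := Set.indicator (Set.Iio (0:ℝ)) (fun t => (μp+μm) * gaussD t * ψ 1)
    with hflimdef
  have hflim_int : ∫ t, flim t = (μp + μm) * ψ 1 / 2 := by
    rw [hflimdef, MeasureTheory.integral_indicator measurableSet_Iio]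
    simp_rw [show ∀ t : ℝ, (μp+μm) * gaussD t * ψ 1 = ((μp+μm) * ψ 1) * gaussD t
      from fun t => by ring]
    rw [MeasureTheory.integral_const_mul, gaussD_half]
    ring
  rw [← hflim_int]
  apply MeasureTheory.tendsto_integral_filter_of_dominated_convergence bound
  -- measurability
  · filter_upwards [self_mem_nhdsWithin] with Q hQ
    have hQpos : (0:ℝ) < Q := hQ
    have hs : 0 < Real.sqrt Q := Real.sqrt_pos.mpr hQpos
    have hr : 0 < σ * Real.sqrt Q := mul_pos hσ hs
    rw [Fq]
    rw [aestronglyMeasurable_indicator_iff measurableSet_Ioc]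
    apply ContinuousOn.aestronglyMeasurable _ measurableSet_Ioc
    apply ContinuousOn.mul continuousOn_const
    apply ContinuousOn.mul
    · exact ((cdf_continuous.comp (continuous_id.add continuous_const)).sub
        (cdf_continuous.comp (continuous_id.sub continuous_const))).continuousOn
    · apply hψ.comp ((continuous_const.add (continuous_const.mul continuous_id)).continuousOn)
      intro t ht
      obtain ⟨h1, h2⟩ := ht
      constructor
      · have h3 := (mul_lt_mul_iff_right₀ hr).mpr h1
        rw [mul_neg, mul_inv_cancel₀ (ne_of_gt hr)] at h3
        simp only [Pi.add_apply, Pi.mul_apply, id_eq]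
        nlinarith
      · simp only [Pi.add_apply, Pi.mul_apply, id_eq]
        nlinarith [mul_nonpos_of_nonneg_of_nonpos hr.le h2]
  -- bound
  · filter_upwards [self_mem_nhdsWithin, hδ_small] with Q hQ hδ1
    have hQpos : (0:ℝ) < Q := hQ
    have hs : 0 < Real.sqrt Q := Real.sqrt_pos.mpr hQpos
    have hr : 0 < σ * Real.sqrt Q := mul_pos hσ hs
    apply Filter.Eventually.of_forall
    intro t
    set dQ : ℝ := (|μp| + |μm|) * Real.sqrt Q / σ with hδdef
    have hδnn : 0 ≤ dQ := by positivity
    by_cases ht : t ∈ Set.Ioc (-(σ*Real.sqrt Q)⁻¹) (0:ℝ)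
    · rw [Fq, Set.indicator_of_mem ht]
      have hem : |μm * Real.sqrt Q / σ| ≤ dQ := by
        rw [hδdef, abs_div, abs_mul, abs_of_nonneg hs.le, abs_of_pos hσ,
          div_le_div_iff_of_pos_right hσ]
        exact mul_le_mul_of_nonneg_right (le_add_of_nonneg_left (abs_nonneg μp)) hs.le
      have hep : |μp * Real.sqrt Q / σ| ≤ dQ := by
        rw [hδdef, abs_div, abs_mul, abs_of_nonneg hs.le, abs_of_pos hσ,
          div_le_div_iff_of_pos_right hσ]
        exact mul_le_mul_of_nonneg_right (le_add_of_nonneg_right (abs_nonneg μm)) hs.le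
      have hΔ := cdf_diff_bound (em := μm * Real.sqrt Q / σ) (ep := μp * Real.sqrt Q / σ)
        ht.2 hem hep hδ1.le
      have hψb : |ψ (1 + σ*Real.sqrt Q*t)| ≤ M := by
        apply hM
        obtain ⟨h1, h2⟩ := ht
        constructor
        · have h3 := (mul_lt_mul_iff_right₀ hr).mpr h1
          rw [mul_neg, mul_inv_cancel₀ (ne_of_gt hr)] at h3
          nlinarith
        · nlinarith [mul_nonpos_of_nonneg_of_nonpos hr.le h2]
      have habs : (σ/Real.sqrt Q) * |μp * Real.sqrt Q / σ + μm * Real.sqrt Q / σ|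
          = |μp + μm| := by
        rw [show μp * Real.sqrt Q / σ + μm * Real.sqrt Q / σ = (μp + μm) * (Real.sqrt Q / σ)
          by ring, abs_mul, abs_of_pos (div_pos hs hσ)]
        field_simp
      rw [Real.norm_eq_abs, abs_mul, abs_mul, abs_of_pos (div_pos hσ hs)]
      calc (σ/Real.sqrt Q) * (|stdNormalCDF (t + μp*Real.sqrt Q/σ)
              - stdNormalCDF (t - μm*Real.sqrt Q/σ)| * |ψ (1 + σ*Real.sqrt Q*t)|)
          ≤ (σ/Real.sqrt Q) * (((Real.exp (1/2) * gaussD (t+1))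
              * |μp * Real.sqrt Q / σ + μm * Real.sqrt Q / σ|) * M) := by
            apply mul_le_mul_of_nonneg_left _ (div_pos hσ hs).le
            exact mul_le_mul hΔ hψb (abs_nonneg _)
              (mul_nonneg (mul_nonneg (Real.exp_nonneg _) (gaussD_nonneg _)) (abs_nonneg _))
        _ = (Real.exp (1/2) * gaussD (t+1) * M)
              * ((σ/Real.sqrt Q) * |μp * Real.sqrt Q / σ + μm * Real.sqrt Q / σ|) := by ring
        _ = (Real.exp (1/2) * gaussD (t+1) * M) * |μp + μm| := by rw [habs]
        _ ≤ (Real.exp (1/2) * gaussD (t+1) * M) * (|μp| + |μm|) := by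
            apply mul_le_mul_of_nonneg_left (abs_add_le μp μm)
              (mul_nonneg (mul_nonneg (Real.exp_nonneg _) (gaussD_nonneg _)) hM0')
        _ = bound t := by rw [hbdef]; ring
    · rw [Fq, Set.indicator_of_notMem ht, norm_zero, hbdef]
      exact mul_nonneg (mul_nonneg (by positivity) hM0') (gaussD_nonneg _)
  -- integrable bound
  · exact hbound_int
  -- pointwise limit
  · have h0 : ∀ᵐ (t : ℝ), t ≠ 0 := by
      have hcompl : ({(0:ℝ)} : Set ℝ)ᶜ ∈ MeasureTheory.ae MeasureTheory.volume :=
        MeasureTheory.compl_mem_ae_iff.mpr Real.volume_singleton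
      filter_upwards [hcompl] with t ht
      simpa using ht
    filter_upwards [h0] with t ht
    rcases lt_or_gt_of_ne ht with htn | htp
    · -- t < 0
      have hmem : t ∈ Set.Iio (0:ℝ) := htn
      rw [hflimdef, Set.indicator_of_mem hmem]
      -- eventual membership condition
      have hmemev : ∀ᶠ Q in nhdsWithin 0 (Set.Ioi 0),
          t ∈ Set.Ioc (-(σ*Real.sqrt Q)⁻¹) (0:ℝ) := by
        have htend : Tendsto (fun Q => σ * Real.sqrt Q * (-t)) (nhdsWithin 0 (Set.Ioi 0))
            (nhds 0) := by
          have := (hsqrt_tendsto.const_mul σ).mul_const (-t)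
          simpa using this
        filter_upwards [self_mem_nhdsWithin, htend.eventually_lt_const one_pos] with Q hQ hlt
        have hQpos : (0:ℝ) < Q := hQ
        have hs : 0 < Real.sqrt Q := Real.sqrt_pos.mpr hQpos
        have hr : 0 < σ * Real.sqrt Q := mul_pos hσ hs
        constructor
        · rw [neg_lt, inv_eq_one_div, lt_div_iff₀ hr]
          nlinarith [hlt]
        · exact htn.le
      -- T1
      have T1 : Tendsto (fun Q => (σ/Real.sqrt Q) * (stdNormalCDF (t + μp*Real.sqrt Q/σ)
            - stdNormalCDF (t - μm*Real.sqrt Q/σ))) (nhdsWithin 0 (Set.Ioi 0))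
          (nhds ((μp + μm) * gaussD t)) := by
        rw [← tendsto_sub_nhds_zero_iff]
        rw [tendsto_zero_iff_abs_tendsto_zero]
        apply squeeze_zero' (Filter.Eventually.of_forall (fun Q => abs_nonneg _))
          (g := fun Q => |μp + μm| * ((|μp| + |μm|) * Real.sqrt Q / σ))
        · filter_upwards [self_mem_nhdsWithin] with Q hQ
          have hQpos : (0:ℝ) < Q := hQ
          have hs : 0 < Real.sqrt Q := Real.sqrt_pos.mpr hQpos
          set dQ : ℝ := (|μp| + |μm|) * Real.sqrt Q / σ with hδdef
          have hem : |μm * Real.sqrt Q / σ| ≤ dQ := by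
            rw [hδdef, abs_div, abs_mul, abs_of_nonneg hs.le, abs_of_pos hσ,
              div_le_div_iff_of_pos_right hσ]
            exact mul_le_mul_of_nonneg_right (le_add_of_nonneg_left (abs_nonneg μp)) hs.le
          have hep : |μp * Real.sqrt Q / σ| ≤ dQ := by
            rw [hδdef, abs_div, abs_mul, abs_of_nonneg hs.le, abs_of_pos hσ,
              div_le_div_iff_of_pos_right hσ]
            exact mul_le_mul_of_nonneg_right (le_add_of_nonneg_right (abs_nonneg μm)) hs.le
          have happ := cdf_diff_approx (t := t) hem hep
          have hq : (σ/Real.sqrt Q) * (μp * Real.sqrt Q / σ + μm * Real.sqrt Q / σ)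
              = μp + μm := by
            field_simp
          have habs : (σ/Real.sqrt Q) * |μp * Real.sqrt Q / σ + μm * Real.sqrt Q / σ|
              = |μp + μm| := by
            rw [show μp * Real.sqrt Q / σ + μm * Real.sqrt Q / σ = (μp + μm) * (Real.sqrt Q / σ)
              by ring, abs_mul, abs_of_pos (div_pos hs hσ)]
            field_simp
          have key : (σ/Real.sqrt Q) * (stdNormalCDF (t + μp*Real.sqrt Q/σ)
                - stdNormalCDF (t - μm*Real.sqrt Q/σ)) - (μp + μm) * gaussD t
              = (σ/Real.sqrt Q) * ((stdNormalCDF (t + μp*Real.sqrt Q/σ)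
                - stdNormalCDF (t - μm*Real.sqrt Q/σ))
                - (μp * Real.sqrt Q / σ + μm * Real.sqrt Q / σ) * gaussD t) := by
            linear_combination gaussD t * hq
          rw [key, abs_mul, abs_of_pos (div_pos hσ hs)]
          calc (σ/Real.sqrt Q) * |stdNormalCDF (t + μp*Real.sqrt Q/σ)
                - stdNormalCDF (t - μm*Real.sqrt Q/σ)
                - (μp * Real.sqrt Q / σ + μm * Real.sqrt Q / σ) * gaussD t|
              ≤ (σ/Real.sqrt Q) * (dQ * |μp * Real.sqrt Q / σ + μm * Real.sqrt Q / σ|) :=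
                mul_le_mul_of_nonneg_left happ (div_pos hσ hs).le
            _ = dQ * ((σ/Real.sqrt Q) * |μp * Real.sqrt Q / σ + μm * Real.sqrt Q / σ|) := by
                ring
            _ = dQ * |μp + μm| := by rw [habs]
            _ = |μp + μm| * ((|μp| + |μm|) * Real.sqrt Q / σ) := by rw [hδdef]; ring
        · have := hδ_tendsto.const_mul (|μp + μm|)
          simpa using this
      -- T2
      have T2 : Tendsto (fun Q => ψ (1 + σ*Real.sqrt Q*t)) (nhdsWithin 0 (Set.Ioi 0))
          (nhds (ψ 1)) := by
        have hcw : ContinuousWithinAt ψ (Set.Icc 0 1) 1 :=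
          hψ 1 (by constructor <;> norm_num)
        apply hcw.tendsto.comp
        rw [tendsto_nhdsWithin_iff]
        constructor
        · have : Tendsto (fun Q => 1 + σ * Real.sqrt Q * t) (nhdsWithin 0 (Set.Ioi 0))
              (nhds (1 + σ * 0 * t)) := by
            apply Tendsto.const_add
            exact (hsqrt_tendsto.const_mul σ).mul_const t
          simpa using this
        · filter_upwards [hmemev, self_mem_nhdsWithin] with Q hmem2 hQ
          have hQpos : (0:ℝ) < Q := hQ
          have hs : 0 < Real.sqrt Q := Real.sqrt_pos.mpr hQpos
          have hr : 0 < σ * Real.sqrt Q := mul_pos hσ hs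
          obtain ⟨h1, h2⟩ := hmem2
          constructor
          · have h3 := (mul_lt_mul_iff_right₀ hr).mpr h1
            rw [mul_neg, mul_inv_cancel₀ (ne_of_gt hr)] at h3
            nlinarith
          · nlinarith [mul_nonpos_of_nonneg_of_nonpos hr.le h2]
      have hprod := T1.mul T2
      apply Tendsto.congr' _ hprod
      filter_upwards [hmemev] with Q hmem2
      rw [Fq, Set.indicator_of_mem hmem2]
      ring
    · -- t > 0
      have : ∀ Q : ℝ, Fq σ μp μm ψ Q t = 0 := by
        intro Q
        rw [Fq, Set.indicator_of_notMem]
        intro hmem2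
        exact absurd hmem2.2 (not_le.mpr htp)
      rw [hflimdef, Set.indicator_of_notMem (by simpa using htp.le)]
      exact Tendsto.congr (fun Q => (this Q).symm) tendsto_const_nhds

/-- Gaussian-tail asymptotics at the heart of Proposition 3:
∫₀¹ [Φ((x-1+μ₊Q)/(σ√Q)) - Φ((x-1-μ₋Q)/(σ√Q))] ψ(x) dx = Q ψ(1)(μ₊+μ₋)/2 + o(Q)
as Q → 0⁺. -/
theorem stmt12 (σ μp μm : ℝ) (hσ : 0 < σ) (ψ : ℝ → ℝ)
    (hψ : ContinuousOn ψ (Set.Icc 0 1)) (hbc : ψ 0 = ψ 1) :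
    (fun Q => (∫ x in (0:ℝ)..1,
        (stdNormalCDF ((x - 1 + μp*Q)/(σ*Real.sqrt Q))
          - stdNormalCDF ((x - 1 - μm*Q)/(σ*Real.sqrt Q))) * ψ x)
      - Q * ψ 1 * (μp + μm) / 2)
    =o[nhdsWithin 0 (Set.Ioi 0)] fun Q => Q := by
  by_cases hc : μp + μm = 0
  · have hzero : (fun Q => (∫ x in (0:ℝ)..1,
        (stdNormalCDF ((x - 1 + μp*Q)/(σ*Real.sqrt Q))
          - stdNormalCDF ((x - 1 - μm*Q)/(σ*Real.sqrt Q))) * ψ x)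
      - Q * ψ 1 * (μp + μm) / 2) = fun _ => (0:ℝ) := by
      funext Q
      have harg : ∀ x : ℝ, x - 1 - μm*Q = x - 1 + μp*Q := by
        intro x; linear_combination -Q * hc
      have hint : ∀ x : ℝ, (stdNormalCDF ((x - 1 + μp*Q)/(σ*Real.sqrt Q))
          - stdNormalCDF ((x - 1 - μm*Q)/(σ*Real.sqrt Q))) * ψ x = 0 := by
        intro x; rw [harg x, sub_self, zero_mul]
      rw [hc]
      simp only [hint, mul_zero, zero_div]
      rw [intervalIntegral.integral_zero]
      ring
    rw [hzero]
    exact isLittleO_zero _ _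
  · rw [isLittleO_iff_tendsto' (by
      filter_upwards [self_mem_nhdsWithin] with Q hQ h
      exact absurd h (ne_of_gt hQ))]
    have hT := tendsto_Fq σ μp μm hσ ψ hψ
    have hT0 : Tendsto (fun Q => (∫ t, Fq σ μp μm ψ Q t) - (μp + μm) * ψ 1 / 2)
        (nhdsWithin 0 (Set.Ioi 0)) (nhds 0) := by
      have := hT.sub_const ((μp + μm) * ψ 1 / 2)
      simpa using this
    apply Tendsto.congr' _ hT0
    filter_upwards [self_mem_nhdsWithin] with Q hQ
    have hQpos : (0:ℝ) < Q := hQ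
    rw [key_eq σ μp μm hσ ψ hQpos]
    field_simp
end
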